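/- arXiv:1408.4902 — 5 statements merged into one kernel-verified Lean document; each statement's English description precedes it below -/
import Mathlib

section
/- Descartes' Circle Theorem (externally tangent case): Let c₁, c₂, c₃, c₄ be points of the Euclidean plane and r₁, r₂, r₃, r₄ > 0 be real numbers such that the four circles with centers cᵢ and radii rᵢ are pairwise externally tangent, i.e. dist(cᵢ, cⱼ) = rᵢ + rⱼ for all i ≠ j. Then (1/r₁ + 1/r₂ + 1/r₃ + 1/r₄)² = 2·(1/r₁² + 1/r₂² + 1/r₃² + 1/r₄²). -/
/-! Four points of the plane span a tetrahedron of volume zero, so their six squared distances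
satisfy the Cayley–Menger relation. For pairwise tangent circles the squared distances are
`(rᵢ + rⱼ)²`, and there the Cayley–Menger polynomial is a multiple of
`(∑ rⱼ rₖ rₗ)² - 2 ∑ (rⱼ rₖ rₗ)²`; dividing by `(r₀ r₁ r₂ r₃)²` gives Descartes' relation. -/

/-- `-1/2` times the `5 × 5` Cayley–Menger determinant of four points with squared distances
`dᵢⱼ`, i.e. `-144` times the squared volume of the tetrahedron they span. -/
def cayleyMenger (d₀₁ d₀₂ d₀₃ d₁₂ d₁₃ d₂₃ : ℝ) : ℝ :=
  d₁₂ * d₁₃ * d₂₃ - d₀₃ * d₁₂ * d₂₃ - d₀₃ * d₁₂ * d₁₃ + d₀₃ * d₁₂ ^ 2 + d₀₃ ^ 2 * d₁₂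
    - d₀₂ * d₁₃ * d₂₃ + d₀₂ * d₁₃ ^ 2 - d₀₂ * d₁₂ * d₁₃ + d₀₂ * d₀₃ * d₂₃ - d₀₂ * d₀₃ * d₁₃
    - d₀₂ * d₀₃ * d₁₂ + d₀₂ ^ 2 * d₁₃ + d₀₁ * d₂₃ ^ 2 - d₀₁ * d₁₃ * d₂₃ - d₀₁ * d₁₂ * d₂₃
    - d₀₁ * d₀₃ * d₂₃ + d₀₁ * d₀₃ * d₁₃ - d₀₁ * d₀₃ * d₁₂ - d₀₁ * d₀₂ * d₂₃ - d₀₁ * d₀₂ * d₁₃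
    + d₀₁ * d₀₂ * d₁₂ + d₀₁ ^ 2 * d₂₃

theorem EuclideanSpace.dist_sq_eq_fin_two (x y : EuclideanSpace ℝ (Fin 2)) :
    dist x y ^ 2 = (x 0 - y 0) ^ 2 + (x 1 - y 1) ^ 2 := by
  simp only [EuclideanSpace.dist_sq_eq, Fin.sum_univ_two, Real.dist_eq, sq_abs]

theorem cayleyMenger_dist_sq_eq_zero (p : Fin 4 → EuclideanSpace ℝ (Fin 2)) :
    cayleyMenger (dist (p 0) (p 1) ^ 2) (dist (p 0) (p 2) ^ 2) (dist (p 0) (p 3) ^ 2)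
      (dist (p 1) (p 2) ^ 2) (dist (p 1) (p 3) ^ 2) (dist (p 2) (p 3) ^ 2) = 0 := by
  simp only [cayleyMenger, EuclideanSpace.dist_sq_eq_fin_two]
  ring

theorem cayleyMenger_add_sq (r₀ r₁ r₂ r₃ : ℝ) :
    cayleyMenger ((r₀ + r₁) ^ 2) ((r₀ + r₂) ^ 2) ((r₀ + r₃) ^ 2) ((r₁ + r₂) ^ 2)
        ((r₁ + r₃) ^ 2) ((r₂ + r₃) ^ 2) =
      -16 * ((r₁ * r₂ * r₃ + r₀ * r₂ * r₃ + r₀ * r₁ * r₃ + r₀ * r₁ * r₂) ^ 2 -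
        2 * ((r₁ * r₂ * r₃) ^ 2 + (r₀ * r₂ * r₃) ^ 2 + (r₀ * r₁ * r₃) ^ 2 +
          (r₀ * r₁ * r₂) ^ 2)) := by
  simp only [cayleyMenger]
  ring

theorem descartes_of_cayleyMenger_add_sq_eq_zero {r₀ r₁ r₂ r₃ : ℝ}
    (h₀ : r₀ ≠ 0) (h₁ : r₁ ≠ 0) (h₂ : r₂ ≠ 0) (h₃ : r₃ ≠ 0)
    (hcm : cayleyMenger ((r₀ + r₁) ^ 2) ((r₀ + r₂) ^ 2) ((r₀ + r₃) ^ 2) ((r₁ + r₂) ^ 2)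
        ((r₁ + r₃) ^ 2) ((r₂ + r₃) ^ 2) = 0) :
    (1 / r₀ + 1 / r₁ + 1 / r₂ + 1 / r₃) ^ 2 =
      2 * ((1 / r₀) ^ 2 + (1 / r₁) ^ 2 + (1 / r₂) ^ 2 + (1 / r₃) ^ 2) := by
  rw [cayleyMenger_add_sq] at hcm
  field_simp
  linear_combination (-1 / 16 : ℝ) * hcm

/-- **Descartes' Circle Theorem** (externally tangent case). If four circles in the
Euclidean plane, with centers `c i` and radii `r i > 0`, are pairwise externally tangent
(i.e. `dist (c i) (c j) = r i + r j` for `i ≠ j`), then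
`(1/r₁ + 1/r₂ + 1/r₃ + 1/r₄)² = 2 (1/r₁² + 1/r₂² + 1/r₃² + 1/r₄²)`. -/
theorem descartes_circle_theorem
    (c : Fin 4 → EuclideanSpace ℝ (Fin 2)) (r : Fin 4 → ℝ)
    (hr : ∀ i, 0 < r i)
    (htan : ∀ i j, i ≠ j → dist (c i) (c j) = r i + r j) :
    (1 / r 0 + 1 / r 1 + 1 / r 2 + 1 / r 3) ^ 2 =
      2 * ((1 / r 0) ^ 2 + (1 / r 1) ^ 2 + (1 / r 2) ^ 2 + (1 / r 3) ^ 2) := by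
  have hcm := cayleyMenger_dist_sq_eq_zero c
  rw [htan 0 1 (by decide), htan 0 2 (by decide), htan 0 3 (by decide),
    htan 1 2 (by decide), htan 1 3 (by decide), htan 2 3 (by decide)] at hcm
  exact descartes_of_cayleyMenger_add_sq_eq_zero (hr 0).ne' (hr 1).ne' (hr 2).ne' (hr 3).ne' hcm
end

section
/- Let C₁, C₂, C₃ be three circles in the Euclidean plane with centers c₁, c₂, c₃ and radii r₁ ≤ r₂ ≤ r₃ (all positive) that are pairwise externally tangent, i.e. dist(cᵢ, cⱼ) = rᵢ + rⱼ for i ≠ j, and for i ≠ j let p_{ij} = cᵢ + (rᵢ/(rᵢ+rⱼ))·(cⱼ − cᵢ) be the point of tangency of Cᵢ and Cⱼ. Suppose a circle with center c and radius r > 0 lies completely inside the curvilinear triangle bounded by the three circles, in the sense that the closed disk closedBall(c, r) is contained in the convex hull of {p₁₂, p₁₃, p₂₃} and the open disk ball(c, r) is disjoint from each open disk ball(cᵢ, rᵢ) for i = 1, 2, 3. Then r ≤ r₂/2 (at most half the median of the three radii). -/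
/-!
The sum of distances `S x = dist x c₁ + dist x c₂ + dist x c₃` is convex, so on the triangle
spanned by the tangency points it is bounded by its value at some vertex. At the centre `c` of
the inscribed disk, disjointness gives `S c ≥ r₁ + r₂ + r₃ + 3 r`. At the tangency point `p` of
`Cᵢ` and `Cⱼ` the distances to `cᵢ, cⱼ` are `rᵢ, rⱼ`, and Stewart's theorem gives
`dist p cₖ ^ 2 = rₖ ^ 2 + 4 rᵢ rⱼ rₖ / (rᵢ + rⱼ) ≤ (rₖ + 3 r₂ / 2) ^ 2` once `r₁ ≤ r₂ ≤ r₃`.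
Hence `3 r ≤ 3 r₂ / 2`.
-/

open Metric Set

section Module

variable {V : Type*} [AddCommGroup V] [Module ℝ V]

noncomputable def tangencyPoint (c₁ c₂ : V) (r₁ r₂ : ℝ) : V := c₁ + (r₁ / (r₁ + r₂)) • (c₂ - c₁)

theorem tangencyPoint_comm (c₁ c₂ : V) {r₁ r₂ : ℝ} (h : r₁ + r₂ ≠ 0) :
    tangencyPoint c₁ c₂ r₁ r₂ = tangencyPoint c₂ c₁ r₂ r₁ := by
  have h₂ : r₂ / (r₂ + r₁) = 1 - r₁ / (r₁ + r₂) := by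
    rw [add_comm r₂, eq_sub_iff_add_eq, ← add_div, add_comm r₂, div_self h]
  rw [tangencyPoint, tangencyPoint, h₂, sub_smul, one_smul, smul_sub, smul_sub]
  abel

end Module

section InnerProductSpace

variable {E : Type*} [NormedAddCommGroup E] [InnerProductSpace ℝ E]

/-- Stewart's theorem, for the point dividing `[x, y]` in the ratio `t : 1 - t`. -/
theorem dist_add_smul_sub_sq (x y z : E) (t : ℝ) :
    dist (x + t • (y - x)) z ^ 2
      = (1 - t) * dist x z ^ 2 + t * dist y z ^ 2 - t * (1 - t) * dist x y ^ 2 := by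
  simp only [dist_eq_norm, ← real_inner_self_eq_norm_sq, inner_sub_left, inner_sub_right,
    inner_add_left, inner_add_right, real_inner_smul_left, real_inner_smul_right]
  ring

variable {c₁ c₂ c₃ : E} {r₁ r₂ r₃ : ℝ}

theorem dist_tangencyPoint_left (hr₁ : 0 < r₁) (hr₂ : 0 < r₂) (d₁₂ : dist c₁ c₂ = r₁ + r₂) :
    dist (tangencyPoint c₁ c₂ r₁ r₂) c₁ = r₁ := by
  rw [tangencyPoint, dist_eq_norm, add_sub_cancel_left, norm_smul, ← dist_eq_norm',
    d₁₂, Real.norm_of_nonneg (by positivity), div_mul_cancel₀ _ (by positivity)]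

theorem dist_tangencyPoint_right (hr₁ : 0 < r₁) (hr₂ : 0 < r₂) (d₁₂ : dist c₁ c₂ = r₁ + r₂) :
    dist (tangencyPoint c₁ c₂ r₁ r₂) c₂ = r₂ := by
  rw [tangencyPoint_comm _ _ (by positivity : r₁ + r₂ ≠ 0)]
  exact dist_tangencyPoint_left hr₂ hr₁ (by rw [dist_comm, d₁₂, add_comm])

theorem dist_tangencyPoint_sq (d₁₂ : dist c₁ c₂ = r₁ + r₂) (d₁₃ : dist c₁ c₃ = r₁ + r₃)
    (d₂₃ : dist c₂ c₃ = r₂ + r₃) (h : r₁ + r₂ ≠ 0) :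
    dist (tangencyPoint c₁ c₂ r₁ r₂) c₃ ^ 2 = r₃ ^ 2 + 4 * r₁ * r₂ * r₃ / (r₁ + r₂) := by
  rw [tangencyPoint, dist_add_smul_sub_sq, d₁₂, d₁₃, d₂₃]
  field_simp
  ring

theorem sum_dist_tangencyPoint_le {m : ℝ} (hr₁ : 0 < r₁) (hr₂ : 0 < r₂) (hr₃ : 0 < r₃)
    (hm : 0 ≤ m) (d₁₂ : dist c₁ c₂ = r₁ + r₂) (d₁₃ : dist c₁ c₃ = r₁ + r₃)
    (d₂₃ : dist c₂ c₃ = r₂ + r₃) (h : 4 * r₁ * r₂ * r₃ / (r₁ + r₂) ≤ m * (2 * r₃ + m)) :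
    dist (tangencyPoint c₁ c₂ r₁ r₂) c₁ + dist (tangencyPoint c₁ c₂ r₁ r₂) c₂
      + dist (tangencyPoint c₁ c₂ r₁ r₂) c₃ ≤ r₁ + r₂ + r₃ + m := by
  have h₃ : dist (tangencyPoint c₁ c₂ r₁ r₂) c₃ ≤ r₃ + m := by
    refine (pow_le_pow_iff_left₀ dist_nonneg (by positivity) two_ne_zero).mp ?_
    calc dist (tangencyPoint c₁ c₂ r₁ r₂) c₃ ^ 2 = r₃ ^ 2 + 4 * r₁ * r₂ * r₃ / (r₁ + r₂) :=
          dist_tangencyPoint_sq d₁₂ d₁₃ d₂₃ (by positivity)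
      _ ≤ r₃ ^ 2 + m * (2 * r₃ + m) := by gcongr
      _ = (r₃ + m) ^ 2 := by ring
  rw [dist_tangencyPoint_left hr₁ hr₂ d₁₂, dist_tangencyPoint_right hr₁ hr₂ d₁₂]
  linarith

theorem sum_dist_le_of_mem_tangencyPoints {p : E} (hr₁ : 0 < r₁) (h₁₂ : r₁ ≤ r₂) (h₂₃ : r₂ ≤ r₃)
    (d₁₂ : dist c₁ c₂ = r₁ + r₂) (d₁₃ : dist c₁ c₃ = r₁ + r₃) (d₂₃ : dist c₂ c₃ = r₂ + r₃)
    (hp : p ∈ ({tangencyPoint c₁ c₂ r₁ r₂, tangencyPoint c₁ c₃ r₁ r₃,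
      tangencyPoint c₂ c₃ r₂ r₃} : Set E)) :
    dist p c₁ + dist p c₂ + dist p c₃ ≤ r₁ + r₂ + r₃ + 3 / 2 * r₂ := by
  have hr₂ : 0 < r₂ := hr₁.trans_le h₁₂
  have hr₃ : 0 < r₃ := hr₂.trans_le h₂₃
  have hm : 0 ≤ 3 / 2 * r₂ := by positivity
  rcases hp with rfl | rfl | rfl
  · refine sum_dist_tangencyPoint_le hr₁ hr₂ hr₃ hm d₁₂ d₁₃ d₂₃ ?_
    rw [div_le_iff₀ (by positivity)]
    nlinarith [mul_nonneg (mul_pos hr₂ hr₃).le (sub_nonneg.2 h₁₂), mul_pos (mul_pos hr₁ hr₂) hr₂,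
      mul_pos (mul_pos hr₂ hr₂) hr₂]
  · have := sum_dist_tangencyPoint_le hr₁ hr₃ hr₂ hm d₁₃ d₁₂
      (by rw [dist_comm, d₂₃, add_comm]) ?_
    · linarith
    rw [div_le_iff₀ (by positivity)]
    nlinarith [mul_pos hr₂ hr₃, mul_pos hr₁ hr₂]
  · have := sum_dist_tangencyPoint_le hr₂ hr₃ hr₁ hm d₂₃
      (by rw [dist_comm, d₁₂, add_comm]) (by rw [dist_comm, d₁₃, add_comm]) ?_
    · linarith
    rw [div_le_iff₀ (by positivity)]
    nlinarith [mul_nonneg (mul_pos hr₂ hr₃).le (sub_nonneg.2 h₁₂), mul_pos (mul_pos hr₁ hr₂) hr₂,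
      mul_pos (mul_pos hr₂ hr₂) hr₂, mul_pos (mul_pos hr₂ hr₂) hr₃]

end InnerProductSpace

/-- Any circle lying completely inside the curvilinear triangle bounded by three
pairwise externally tangent circles with radii `r₁ ≤ r₂ ≤ r₃` has radius at most
half the median radius `r₂`. -/
theorem circle_in_curvilinear_triangle_radius_le_half_median
    (c₁ c₂ c₃ c : EuclideanSpace ℝ (Fin 2)) (r₁ r₂ r₃ r : ℝ)
    (hr₁ : 0 < r₁) (hr₂ : 0 < r₂) (hr₃ : 0 < r₃) (hr : 0 < r)
    (h₁₂ : r₁ ≤ r₂) (h₂₃ : r₂ ≤ r₃)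
    (d₁₂ : dist c₁ c₂ = r₁ + r₂) (d₁₃ : dist c₁ c₃ = r₁ + r₃)
    (d₂₃ : dist c₂ c₃ = r₂ + r₃)
    (hsub : Metric.closedBall c r ⊆
      convexHull ℝ {c₁ + (r₁ / (r₁ + r₂)) • (c₂ - c₁),
                    c₁ + (r₁ / (r₁ + r₃)) • (c₃ - c₁),
                    c₂ + (r₂ / (r₂ + r₃)) • (c₃ - c₂)})
    (hdisj₁ : Disjoint (Metric.ball c r) (Metric.ball c₁ r₁))
    (hdisj₂ : Disjoint (Metric.ball c r) (Metric.ball c₂ r₂))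
    (hdisj₃ : Disjoint (Metric.ball c r) (Metric.ball c₃ r₃)) :
    r ≤ r₂ / 2 := by
  have hc : c ∈ convexHull ℝ {tangencyPoint c₁ c₂ r₁ r₂, tangencyPoint c₁ c₃ r₁ r₃,
      tangencyPoint c₂ c₃ r₂ r₃} := hsub (mem_closedBall_self hr.le)
  obtain ⟨p, hp, hcp⟩ := (((convexOn_univ_dist c₁).add (convexOn_univ_dist c₂)).add
    (convexOn_univ_dist c₃)).exists_ge_of_mem_convexHull (subset_univ _) hc
  have hp_le := sum_dist_le_of_mem_tangencyPoints hr₁ h₁₂ h₂₃ d₁₂ d₁₃ d₂₃ hp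
  have hcc₁ := (disjoint_ball_ball_iff hr hr₁).mp hdisj₁
  have hcc₂ := (disjoint_ball_ball_iff hr hr₂).mp hdisj₂
  have hcc₃ := (disjoint_ball_ball_iff hr hr₃).mp hdisj₃
  simp only [Pi.add_apply] at hcp
  linarith
end

section
/- Let C₁, C₂, C₃ be three circles in the Euclidean plane with centers c₁, c₂, c₃ and positive radii r₁, r₂, r₃ that are pairwise externally tangent, i.e. dist(cᵢ, cⱼ) = rᵢ + rⱼ for i ≠ j, and for i ≠ j let p_{ij} = cᵢ + (rᵢ/(rᵢ+rⱼ))·(cⱼ − cᵢ) be the point of tangency of Cᵢ and Cⱼ. Suppose a circle with center c and radius r > 0 satisfies: the closed disk closedBall(c, r) is contained in the convex hull of {p₁₂, p₁₃, p₂₃}, the open disk ball(c, r) is disjoint from each ball(cᵢ, rᵢ), and the circle is externally tangent to each of the three circles, i.e. dist(c, cᵢ) = r + rᵢ for i = 1, 2, 3. Then 1/r = 1/r₁ + 1/r₂ + 1/r₃ + 2·√(1/(r₁r₂) + 1/(r₂r₃) + 1/(r₃r₁)). -/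
/-!
The center `c` lies in the triangle of the centers `c₁ c₂ c₃`, so `c - c₁ = β (c₂ - c₁) + γ (c₃ - c₁)`
with `β, γ ≥ 0`, `β + γ ≤ 1`. All inner products of `c₂ - c₁, c₃ - c₁, c - c₁` are fixed by the
tangency distances, and pairing the decomposition with each of these vectors gives three linear
equations in `β, γ`. Their consistency (the Gram determinant vanishes) is Descartes' quadratic
`(1/r - 1/r₁ - 1/r₂ - 1/r₃)² = 4 (1/(r₁r₂) + 1/(r₂r₃) + 1/(r₃r₁))`; solving two of them by
Cramer's rule shows that for the smaller root one barycentric weight of `c` would be negative.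
-/

open scoped RealInnerProductSpace

theorem add_div_add_smul_sub_mem_segment {𝕜 E : Type*} [Field 𝕜] [LinearOrder 𝕜]
    [IsStrictOrderedRing 𝕜] [AddCommGroup E] [Module 𝕜 E] (x y : E) {a b : 𝕜}
    (ha : 0 ≤ a) (hb : 0 ≤ b) : x + (a / (a + b)) • (y - x) ∈ segment 𝕜 x y := by
  rw [segment_eq_image']
  exact ⟨_, ⟨by positivity, div_le_one_of_le₀ (by linarith) (by positivity)⟩, rfl⟩

theorem convexHull_tangencyPoints_subset {E : Type*} [AddCommGroup E] [Module ℝ E]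
    (c₁ c₂ c₃ : E) {r₁ r₂ r₃ : ℝ} (hr₁ : 0 ≤ r₁) (hr₂ : 0 ≤ r₂) (hr₃ : 0 ≤ r₃) :
    convexHull ℝ {c₁ + (r₁ / (r₁ + r₂)) • (c₂ - c₁), c₁ + (r₁ / (r₁ + r₃)) • (c₃ - c₁),
      c₂ + (r₂ / (r₂ + r₃)) • (c₃ - c₂)} ⊆ convexHull ℝ {c₁, c₂, c₃} := by
  refine convexHull_min ?_ (convex_convexHull ℝ _)
  simp only [Set.insert_subset_iff, Set.singleton_subset_iff]
  refine ⟨?_, ?_, ?_⟩ <;> refine segment_subset_convexHull (by simp) (by simp)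
    (add_div_add_smul_sub_mem_segment _ _ (by assumption) (by assumption))

theorem exists_sub_eq_smul_add_smul_of_mem_convexHull_triple {E : Type*} [AddCommGroup E]
    [Module ℝ E] {x y z p : E} (hp : p ∈ convexHull ℝ {x, y, z}) :
    ∃ β γ : ℝ, 0 ≤ β ∧ 0 ≤ γ ∧ β + γ ≤ 1 ∧ p - x = β • (y - x) + γ • (z - x) := by
  rw [convexHull_insert (Set.insert_nonempty _ _), convexHull_pair, mem_convexJoin] at hp
  obtain ⟨_, rfl, q, ⟨b, e, hb, he, hbe, rfl⟩, a, t, ha, ht, hat, rfl⟩ := hp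
  refine ⟨t * b, t * e, by positivity, by positivity, ?_, ?_⟩
  · nlinarith
  · rw [eq_sub_of_add_eq hat, eq_sub_of_add_eq' hbe]
    module

theorem inner_sub_sub_of_dist_eq_add {V : Type*} [NormedAddCommGroup V] [InnerProductSpace ℝ V]
    {o p q : V} {ρ a b : ℝ} (hp : dist p o = ρ + a) (hq : dist q o = ρ + b)
    (hpq : dist p q = a + b) : ⟪p - o, q - o⟫ = ρ ^ 2 + ρ * a + ρ * b - a * b := by
  have h := norm_sub_sq_real (p - o) (q - o)
  rw [sub_sub_sub_cancel_right, ← dist_eq_norm, ← dist_eq_norm, ← dist_eq_norm, hp, hq, hpq] at h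
  linear_combination (1 / 2 : ℝ) * h

section Soddy

variable {V : Type*} [NormedAddCommGroup V] [InnerProductSpace ℝ V]
  {c₁ c₂ c₃ c : V} {r₁ r₂ r₃ r β γ : ℝ}

theorem soddy_gram_equations (d₁₂ : dist c₁ c₂ = r₁ + r₂) (d₁₃ : dist c₁ c₃ = r₁ + r₃)
    (d₂₃ : dist c₂ c₃ = r₂ + r₃)
    (t₁ : dist c c₁ = r + r₁) (t₂ : dist c c₂ = r + r₂) (t₃ : dist c c₃ = r + r₃)
    (hc : c - c₁ = β • (c₂ - c₁) + γ • (c₃ - c₁)) :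
    β * (r₁ + r₂) ^ 2 + γ * (r₁ ^ 2 + r₁ * r₂ + r₁ * r₃ - r₂ * r₃)
        = r₁ ^ 2 + r₁ * r + r₁ * r₂ - r * r₂ ∧
      β * (r₁ ^ 2 + r₁ * r₂ + r₁ * r₃ - r₂ * r₃) + γ * (r₁ + r₃) ^ 2
        = r₁ ^ 2 + r₁ * r + r₁ * r₃ - r * r₃ ∧
      β * (r₁ ^ 2 + r₁ * r + r₁ * r₂ - r * r₂) + γ * (r₁ ^ 2 + r₁ * r + r₁ * r₃ - r * r₃)
        = (r + r₁) ^ 2 := by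
  rw [dist_comm] at d₁₂ d₁₃
  have iuu : ⟪c₂ - c₁, c₂ - c₁⟫ = (r₁ + r₂) ^ 2 := by
    rw [real_inner_self_eq_norm_sq, ← dist_eq_norm, d₁₂]
  have ivv : ⟪c₃ - c₁, c₃ - c₁⟫ = (r₁ + r₃) ^ 2 := by
    rw [real_inner_self_eq_norm_sq, ← dist_eq_norm, d₁₃]
  have iww : ⟪c - c₁, c - c₁⟫ = (r + r₁) ^ 2 := by
    rw [real_inner_self_eq_norm_sq, ← dist_eq_norm, t₁]
  have t₁' : dist c c₁ = r₁ + r := t₁.trans (add_comm r r₁)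
  have iuv := inner_sub_sub_of_dist_eq_add d₁₂ d₁₃ d₂₃
  have iwu := inner_sub_sub_of_dist_eq_add t₁' d₁₂ t₂
  have iwv := inner_sub_sub_of_dist_eq_add t₁' d₁₃ t₃
  have hinner (x : V) : ⟪c - c₁, x⟫ = β * ⟪c₂ - c₁, x⟫ + γ * ⟪c₃ - c₁, x⟫ := by
    rw [hc, inner_add_left, real_inner_smul_left, real_inner_smul_left]
  refine ⟨?_, ?_, ?_⟩
  · have h := hinner (c₂ - c₁)
    rwa [iwu, iuu, real_inner_comm (c₂ - c₁), iuv, eq_comm] at h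
  · have h := hinner (c₃ - c₁)
    rwa [iwv, iuv, ivv, eq_comm] at h
  · have h := hinner (c - c₁)
    rwa [iww, real_inner_comm (c - c₁) (c₂ - c₁), real_inner_comm (c - c₁) (c₃ - c₁), iwu, iwv,
      eq_comm] at h

end Soddy

section Descartes

variable {r₁ r₂ r₃ r β γ : ℝ}

/-- Descartes' relation for curvatures, multiplied out by `(r r₁ r₂ r₃)²`. -/
theorem descartes_radii_of_gram
    (e₁ : β * (r₁ + r₂) ^ 2 + γ * (r₁ ^ 2 + r₁ * r₂ + r₁ * r₃ - r₂ * r₃)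
        = r₁ ^ 2 + r₁ * r + r₁ * r₂ - r * r₂)
    (e₂ : β * (r₁ ^ 2 + r₁ * r₂ + r₁ * r₃ - r₂ * r₃) + γ * (r₁ + r₃) ^ 2
        = r₁ ^ 2 + r₁ * r + r₁ * r₃ - r * r₃)
    (e₃ : β * (r₁ ^ 2 + r₁ * r + r₁ * r₂ - r * r₂) + γ * (r₁ ^ 2 + r₁ * r + r₁ * r₃ - r * r₃)
        = (r + r₁) ^ 2) :
    (r₁ * r₂ * r₃ - (r₁ * r₂ + r₂ * r₃ + r₃ * r₁) * r) ^ 2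
      = 4 * (r₁ * r₂ * r₃) * (r₁ + r₂ + r₃) * r ^ 2 := by
  linear_combination (1 / 4 : ℝ) * (4 * r₁ * r₂ * r₃ * (r₁ + r₂ + r₃) * e₃
    - (r₁ ^ 2 + r₁ * r + r₁ * r₂ - r * r₂)
      * ((r₁ + r₃) ^ 2 * e₁ - (r₁ ^ 2 + r₁ * r₂ + r₁ * r₃ - r₂ * r₃) * e₂)
    - (r₁ ^ 2 + r₁ * r + r₁ * r₃ - r * r₃)
      * ((r₁ + r₂) ^ 2 * e₂ - (r₁ ^ 2 + r₁ * r₂ + r₁ * r₃ - r₂ * r₃) * e₁))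

theorem two_mul_mul_add_le_neg_of_sq_eq {a b c s r M : ℝ} (hpos : 0 < s * r * b * c)
    (hM : M ^ 2 = 4 * a * b * c * s * r ^ 2) (hneg : M ≤ 0)
    (hw : 0 ≤ 2 * s * r * b * c + (b + c) * M) : 2 * r * a * (b + c) ≤ -M := by
  have h : (2 * (s * r * b * c)) * (-M - 2 * r * a * (b + c))
      = -M * (2 * s * r * b * c + (b + c) * M) := by
    linear_combination (b + c) * hM
  have := (mul_nonneg_iff_of_pos_left (by positivity)).1 (h ▸ mul_nonneg (neg_nonneg.2 hneg) hw)
  linarith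

theorem soddy_defect_nonneg (hr₁ : 0 < r₁) (hr₂ : 0 < r₂) (hr₃ : 0 < r₃) (hr : 0 < r)
    (hβ : 0 ≤ β) (hγ : 0 ≤ γ) (hβγ : β + γ ≤ 1)
    (e₁ : β * (r₁ + r₂) ^ 2 + γ * (r₁ ^ 2 + r₁ * r₂ + r₁ * r₃ - r₂ * r₃)
        = r₁ ^ 2 + r₁ * r + r₁ * r₂ - r * r₂)
    (e₂ : β * (r₁ ^ 2 + r₁ * r₂ + r₁ * r₃ - r₂ * r₃) + γ * (r₁ + r₃) ^ 2
        = r₁ ^ 2 + r₁ * r + r₁ * r₃ - r * r₃)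
    (hD : (r₁ * r₂ * r₃ - (r₁ * r₂ + r₂ * r₃ + r₃ * r₁) * r) ^ 2
      = 4 * (r₁ * r₂ * r₃) * (r₁ + r₂ + r₃) * r ^ 2) :
    0 ≤ r₁ * r₂ * r₃ - (r₁ * r₂ + r₂ * r₃ + r₃ * r₁) * r := by
  set M := r₁ * r₂ * r₃ - (r₁ * r₂ + r₂ * r₃ + r₃ * r₁) * r
  -- `G` is the Gram determinant of `c₂ - c₁, c₃ - c₁`, so by Cramer's rule `β G`, `γ G` and
  -- `(1 - β - γ) G` are the barycentric weights of `c` times `G`.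
  set G := 4 * r₁ * r₂ * r₃ * (r₁ + r₂ + r₃)
  have hβG : β * G = 2 * (2 * (r₁ + r₂ + r₃) * r * r₁ * r₃ + (r₁ + r₃) * M) := by
    linear_combination (r₁ + r₃) ^ 2 * e₁ - (r₁ ^ 2 + r₁ * r₂ + r₁ * r₃ - r₂ * r₃) * e₂
  have hγG : γ * G = 2 * (2 * (r₁ + r₂ + r₃) * r * r₁ * r₂ + (r₁ + r₂) * M) := by
    linear_combination (r₁ + r₂) ^ 2 * e₂ - (r₁ ^ 2 + r₁ * r₂ + r₁ * r₃ - r₂ * r₃) * e₁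
  have hαG : (1 - β - γ) * G = 2 * (2 * (r₁ + r₂ + r₃) * r * r₂ * r₃ + (r₂ + r₃) * M) := by
    linear_combination - hβG - hγG
  have hGpos : 0 < G := by positivity
  have w₁ : 0 ≤ 2 * (r₁ + r₂ + r₃) * r * r₂ * r₃ + (r₂ + r₃) * M := by
    linarith [mul_nonneg (by linarith : 0 ≤ 1 - β - γ) hGpos.le]
  have w₂ : 0 ≤ 2 * (r₁ + r₂ + r₃) * r * r₁ * r₃ + (r₁ + r₃) * M := by
    linarith [mul_nonneg hβ hGpos.le]
  have w₃ : 0 ≤ 2 * (r₁ + r₂ + r₃) * r * r₁ * r₂ + (r₁ + r₂) * M := by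
    linarith [mul_nonneg hγ hGpos.le]
  -- For the other root `M < 0`, each weight forces `2 r rᵢ (rⱼ + rₖ) ≤ -M`, and the three
  -- bounds add up to more than `-M < r (r₁ r₂ + r₂ r₃ + r₃ r₁)`.
  by_contra! hneg
  have b₁ := two_mul_mul_add_le_neg_of_sq_eq (a := r₁) (by positivity) (by linear_combination hD)
    hneg.le w₁
  have b₂ := two_mul_mul_add_le_neg_of_sq_eq (a := r₂) (by positivity) (by linear_combination hD)
    hneg.le w₂
  have b₃ := two_mul_mul_add_le_neg_of_sq_eq (a := r₃) (by positivity) (by linear_combination hD)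
    hneg.le w₃
  linarith [mul_pos (mul_pos hr₁ hr₂) hr₃]

theorem one_div_eq_add_two_mul_sqrt_of_descartes (hr₁ : 0 < r₁) (hr₂ : 0 < r₂) (hr₃ : 0 < r₃)
    (hr : 0 < r)
    (hD : (r₁ * r₂ * r₃ - (r₁ * r₂ + r₂ * r₃ + r₃ * r₁) * r) ^ 2
      = 4 * (r₁ * r₂ * r₃) * (r₁ + r₂ + r₃) * r ^ 2)
    (hM : 0 ≤ r₁ * r₂ * r₃ - (r₁ * r₂ + r₂ * r₃ + r₃ * r₁) * r) :
    1 / r = 1 / r₁ + 1 / r₂ + 1 / r₃ +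
      2 * Real.sqrt (1 / (r₁ * r₂) + 1 / (r₂ * r₃) + 1 / (r₃ * r₁)) := by
  set q := Real.sqrt (1 / (r₁ * r₂) + 1 / (r₂ * r₃) + 1 / (r₃ * r₁))
  have hq2 : q ^ 2 = 1 / (r₁ * r₂) + 1 / (r₂ * r₃) + 1 / (r₃ * r₁) :=
    Real.sq_sqrt (by positivity)
  have hsq : (2 * r * (r₁ * r₂ * r₃) * q) ^ 2 = 4 * (r₁ * r₂ * r₃) * (r₁ + r₂ + r₃) * r ^ 2 := by
    rw [mul_pow, hq2]
    field_simp
    ring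
  have hMq : r₁ * r₂ * r₃ - (r₁ * r₂ + r₂ * r₃ + r₃ * r₁) * r = 2 * r * (r₁ * r₂ * r₃) * q :=
    (sq_eq_sq₀ hM (by positivity)).1 (hD.trans hsq.symm)
  field_simp
  linear_combination hMq

end Descartes

theorem inner_soddy_circle_curvature_general
    (c₁ c₂ c₃ c : EuclideanSpace ℝ (Fin 2)) (r₁ r₂ r₃ r : ℝ)
    (hr₁ : 0 < r₁) (hr₂ : 0 < r₂) (hr₃ : 0 < r₃) (hr : 0 < r)
    (d₁₂ : dist c₁ c₂ = r₁ + r₂) (d₁₃ : dist c₁ c₃ = r₁ + r₃)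
    (d₂₃ : dist c₂ c₃ = r₂ + r₃)
    (hsub : Metric.closedBall c r ⊆
      convexHull ℝ {c₁ + (r₁ / (r₁ + r₂)) • (c₂ - c₁),
                    c₁ + (r₁ / (r₁ + r₃)) • (c₃ - c₁),
                    c₂ + (r₂ / (r₂ + r₃)) • (c₃ - c₂)})
    (t₁ : dist c c₁ = r + r₁) (t₂ : dist c c₂ = r + r₂) (t₃ : dist c c₃ = r + r₃) :
    1 / r = 1 / r₁ + 1 / r₂ + 1 / r₃ +
      2 * Real.sqrt (1 / (r₁ * r₂) + 1 / (r₂ * r₃) + 1 / (r₃ * r₁)) := by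
  obtain ⟨β, γ, hβ, hγ, hβγ, hc⟩ := exists_sub_eq_smul_add_smul_of_mem_convexHull_triple
    (convexHull_tangencyPoints_subset c₁ c₂ c₃ hr₁.le hr₂.le hr₃.le
      (hsub (Metric.mem_closedBall_self hr.le)))
  obtain ⟨e₁, e₂, e₃⟩ := soddy_gram_equations d₁₂ d₁₃ d₂₃ t₁ t₂ t₃ hc
  have hD := descartes_radii_of_gram e₁ e₂ e₃
  exact one_div_eq_add_two_mul_sqrt_of_descartes hr₁ hr₂ hr₃ hr hD
    (soddy_defect_nonneg hr₁ hr₂ hr₃ hr hβ hγ hβγ e₁ e₂ hD)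

/-- The inner Soddy circle: if a circle of center `c` and radius `r > 0` lies in the
curvilinear triangular gap between three pairwise externally tangent circles and is
externally tangent to all three of them, then
`1/r = 1/r₁ + 1/r₂ + 1/r₃ + 2√(1/(r₁r₂) + 1/(r₂r₃) + 1/(r₃r₁))`. -/
theorem inner_soddy_circle_curvature
    (c₁ c₂ c₃ c : EuclideanSpace ℝ (Fin 2)) (r₁ r₂ r₃ r : ℝ)
    (hr₁ : 0 < r₁) (hr₂ : 0 < r₂) (hr₃ : 0 < r₃) (hr : 0 < r)
    (d₁₂ : dist c₁ c₂ = r₁ + r₂) (d₁₃ : dist c₁ c₃ = r₁ + r₃)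
    (d₂₃ : dist c₂ c₃ = r₂ + r₃)
    (hsub : Metric.closedBall c r ⊆
      convexHull ℝ {c₁ + (r₁ / (r₁ + r₂)) • (c₂ - c₁),
                    c₁ + (r₁ / (r₁ + r₃)) • (c₃ - c₁),
                    c₂ + (r₂ / (r₂ + r₃)) • (c₃ - c₂)})
    (hdisj₁ : Disjoint (Metric.ball c r) (Metric.ball c₁ r₁))
    (hdisj₂ : Disjoint (Metric.ball c r) (Metric.ball c₂ r₂))
    (hdisj₃ : Disjoint (Metric.ball c r) (Metric.ball c₃ r₃))
    (t₁ : dist c c₁ = r + r₁) (t₂ : dist c c₂ = r + r₂) (t₃ : dist c c₃ = r + r₃) :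
    1 / r = 1 / r₁ + 1 / r₂ + 1 / r₃ +
      2 * Real.sqrt (1 / (r₁ * r₂) + 1 / (r₂ * r₃) + 1 / (r₃ * r₁)) :=
  inner_soddy_circle_curvature_general c₁ c₂ c₃ c r₁ r₂ r₃ r hr₁ hr₂ hr₃ hr d₁₂ d₁₃ d₂₃ hsub t₁ t₂
    t₃
end

section
/- Every tree has a balanced circle-contact representation: let V be a nonempty finite type with n = card V, and let G be a simple graph on V that is a tree (connected and acyclic). Then there exist maps c : V → ℝ² and r : V → ℝ with r v > 0 for all v, such that for all distinct u, v ∈ V one has dist(c u, c v) ≥ r u + r v with equality if and only if u and v are adjacent in G, and moreover r u ≤ 2·n·r v for all u, v ∈ V. -/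
/-!
Root the tree and give the disk of a vertex `v` the radius `w v`, the number of vertices in the
subtree of `v`; all radii then lie between `1` and `n`. Every vertex also gets a horizontal slot,
the interval of width `2 w v` centred at the abscissa of its disk. The slots of the children of
`v` have total width `2 w v - 2`, so they fit side by side into the slot of `v` with positive gaps
between them, and each child's disk hangs below its parent's disk at exactly the height at which
the two are tangent. Vertices in disjoint slots are separated horizontally. A proper descendant
`u` of a child `c` of `v` lies inside the slot of `c` and below `c`; since `w u < w c`, an
elementary estimate shows that the disk of `u` is strictly farther from that of `v` than
tangency would require.
-/

open Finset

theorem dist_mk_two (a b c d : ℝ) : dist !₂[a, b] !₂[c, d] = √((a - c) ^ 2 + (b - d) ^ 2) := by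
  simp [EuclideanSpace.dist_eq, Fin.sum_univ_two, Real.dist_eq, sq_abs]

/-- `R`, `r`, `s` are the radii of a vertex, of one of its children and of a proper descendant of
that child; `dx`, `e` are the horizontal offsets child–vertex and descendant–child, `D` is the drop
from the vertex to the tangent child and `f` the further drop to the descendant. -/
theorem sq_add_lt_of_abs_le {R r s dx e D f : ℝ} (hs : 0 ≤ s) (hsr : s < r) (hdx : |dx| ≤ R - r)
    (he : |e| ≤ r - s) (hD : D ^ 2 = (R + r) ^ 2 - dx ^ 2) (hD₀ : 0 ≤ D) (hf : 0 ≤ f) :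
    (R + s) ^ 2 < (dx + e) ^ 2 + (D + f) ^ 2 := by
  have hdxe : -(dx * e) ≤ (R - r) * (r - s) := by
    refine (neg_le_abs _).trans ?_
    rw [abs_mul]
    exact mul_le_mul hdx he (abs_nonneg e) ((abs_nonneg dx).trans hdx)
  have hDf : D ^ 2 ≤ (D + f) ^ 2 := by nlinarith
  nlinarith [mul_pos (sub_pos.2 hsr) (by linarith : 0 < 3 * r + s), sq_nonneg e]

structure Rooting (V : Type*) where
  root : V
  parent : V → V
  depth : V → ℕ
  parent_root : parent root = root
  depth_eq_zero : ∀ {v}, depth v = 0 ↔ v = root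
  depth_parent : ∀ {v}, v ≠ root → depth (parent v) + 1 = depth v

namespace Rooting

variable {V : Type*} (T : Rooting V)

def IsChild (c v : V) : Prop := c ≠ T.root ∧ T.parent c = v

def IsDescendant (u v : V) : Prop := ∃ k, T.parent^[k] u = v

variable {T} {u v w c : V}

theorem depth_parent_eq_sub_one (v : V) : T.depth (T.parent v) = T.depth v - 1 := by
  by_cases hv : v = T.root
  · rw [hv, T.parent_root, T.depth_eq_zero.2 rfl]
  · have := T.depth_parent hv
    omega

theorem depth_iterate_parent (k : ℕ) (v : V) : T.depth (T.parent^[k] v) = T.depth v - k := by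
  induction k with
  | zero => rfl
  | succ k ih => rw [Function.iterate_succ_apply', depth_parent_eq_sub_one, ih]; omega

theorem iterate_parent_of_depth_le {k : ℕ} (h : T.depth v ≤ k) : T.parent^[k] v = T.root :=
  T.depth_eq_zero.1 (by rw [depth_iterate_parent]; omega)

theorem IsChild.depth_eq (h : T.IsChild c v) : T.depth c = T.depth v + 1 :=
  h.2 ▸ (T.depth_parent h.1).symm

theorem IsChild.isDescendant (h : T.IsChild c v) : T.IsDescendant c v := ⟨1, h.2⟩

theorem IsDescendant.refl (v : V) : T.IsDescendant v v := ⟨0, rfl⟩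

theorem IsDescendant.trans (h₁ : T.IsDescendant u v) (h₂ : T.IsDescendant v w) :
    T.IsDescendant u w := by
  obtain ⟨k, rfl⟩ := h₁
  obtain ⟨l, rfl⟩ := h₂
  exact ⟨l + k, Function.iterate_add_apply _ _ _ _⟩

theorem isDescendant_root (v : V) : T.IsDescendant v T.root :=
  ⟨_, iterate_parent_of_depth_le le_rfl⟩

theorem IsDescendant.depth_le (h : T.IsDescendant u v) : T.depth v ≤ T.depth u := by
  obtain ⟨k, rfl⟩ := h
  rw [depth_iterate_parent]
  omega

theorem IsDescendant.iterate_parent_eq (h : T.IsDescendant u v) :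
    T.parent^[T.depth u - T.depth v] u = v := by
  obtain ⟨k, rfl⟩ := h
  rw [depth_iterate_parent]
  rcases le_total k (T.depth u) with hk | hk
  · rw [Nat.sub_sub_self hk]
  · rw [iterate_parent_of_depth_le hk, iterate_parent_of_depth_le (by omega)]

theorem IsDescendant.eq_of_depth_eq {a b : V} (ha : T.IsDescendant u a) (hb : T.IsDescendant u b)
    (h : T.depth a = T.depth b) : a = b := by
  rw [← ha.iterate_parent_eq, ← hb.iterate_parent_eq, h]

theorem IsDescendant.antisymm (h₁ : T.IsDescendant u v) (h₂ : T.IsDescendant v u) : u = v :=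
  (IsDescendant.refl u).eq_of_depth_eq h₁ (le_antisymm h₂.depth_le h₁.depth_le)

theorem IsDescendant.depth_lt (h : T.IsDescendant u v) (hne : u ≠ v) : T.depth v < T.depth u :=
  h.depth_le.lt_of_ne fun hd => hne (h.eq_of_depth_eq (.refl u) hd).symm

theorem IsDescendant.exists_isChild (h : T.IsDescendant u v) (hne : u ≠ v) :
    ∃ c, T.IsChild c v ∧ T.IsDescendant u c := by
  have hlt := h.depth_lt hne
  refine ⟨T.parent^[T.depth u - T.depth v - 1] u, ⟨fun hc => ?_, ?_⟩, ⟨_, rfl⟩⟩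
  · have := congrArg T.depth hc
    rw [depth_iterate_parent, T.depth_eq_zero.2 rfl] at this
    omega
  · rw [← Function.iterate_succ_apply' T.parent]
    convert h.iterate_parent_eq using 2
    omega

theorem isDescendant_or_isDescendant_or_exists_siblings (u v : V) :
    T.IsDescendant u v ∨ T.IsDescendant v u ∨
      ∃ p a b, a ≠ b ∧ T.IsChild a p ∧ T.IsChild b p ∧ T.IsDescendant u a ∧ T.IsDescendant v b := by
  induction hn : T.depth u + T.depth v using Nat.strong_induction_on generalizing u v with
  | _ n ih =>
  wlog huv : T.depth v ≤ T.depth u generalizing u v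
  · rcases this v u (by omega) (by omega) with h | h | ⟨p, a, b, hab, ha, hb, hua, hvb⟩
    · exact Or.inr (Or.inl h)
    · exact Or.inl h
    · exact Or.inr (Or.inr ⟨p, b, a, hab.symm, hb, ha, hvb, hua⟩)
  by_cases hu : u = T.root
  · exact Or.inr (Or.inl (hu ▸ isDescendant_root v))
  have hpu : T.IsChild u (T.parent u) := ⟨hu, rfl⟩
  rcases ih _ (by have := T.depth_parent hu; omega) (T.parent u) v rfl
    with h | h | ⟨p, a, b, hab, ha, hb, hua, hvb⟩
  · exact Or.inl (hpu.isDescendant.trans h)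
  · by_cases hv : v = T.parent u
    · exact Or.inl (hv ▸ hpu.isDescendant)
    obtain ⟨c, hc, hvc⟩ := h.exists_isChild hv
    by_cases hcu : c = u
    · exact Or.inr (Or.inl (hcu ▸ hvc))
    · exact Or.inr (Or.inr ⟨_, u, c, Ne.symm hcu, hpu, hc, .refl u, hvc⟩)
  · exact Or.inr (Or.inr ⟨p, a, b, hab, ha, hb, hpu.isDescendant.trans hua, hvb⟩)

theorem not_isChild_of_isDescendant_of_isChild (hc : T.IsChild c v) (hu : T.IsDescendant u c)
    (hne : u ≠ c) : ¬(T.IsChild u v ∨ T.IsChild v u) := by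
  have := hu.depth_lt hne
  rintro (h | h) <;> have := h.depth_eq <;> have := hc.depth_eq <;> omega

theorem not_isChild_of_siblings {p a b : V} (hab : a ≠ b) (ha : T.IsChild a p) (hb : T.IsChild b p)
    (hu : T.IsDescendant u a) (hv : T.IsDescendant v b) : ¬T.IsChild u v := fun h =>
  hab (hu.eq_of_depth_eq (h.isDescendant.trans hv) (by rw [ha.depth_eq, hb.depth_eq]))

section Weight

variable (T) [Fintype V]

open Classical in
noncomputable def descendants (v : V) : Finset V := {u | T.IsDescendant u v}

open Classical in
noncomputable def children (v : V) : Finset V := {c | T.IsChild c v}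

noncomputable def weight (v : V) : ℕ := #(T.descendants v)

variable {T}

@[simp]
theorem mem_descendants : u ∈ T.descendants v ↔ T.IsDescendant u v := by
  classical
  simp [descendants]

@[simp]
theorem mem_children : c ∈ T.children v ↔ T.IsChild c v := by
  classical
  simp [children]

theorem one_le_weight (v : V) : 1 ≤ T.weight v :=
  card_pos.2 ⟨v, mem_descendants.2 (.refl v)⟩

theorem weight_le_card (v : V) : T.weight v ≤ Fintype.card V :=
  card_le_univ _

theorem IsDescendant.weight_lt (h : T.IsDescendant u v) (hne : u ≠ v) :
    T.weight u < T.weight v := by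
  refine card_lt_card ((ssubset_iff_of_subset fun w hw => ?_).2 ⟨v, ?_, ?_⟩)
  · exact mem_descendants.2 ((mem_descendants.1 hw).trans h)
  · exact mem_descendants.2 (.refl v)
  · exact fun hv => hne (h.antisymm (mem_descendants.1 hv))

theorem weight_eq_one_add_sum_children (v : V) :
    T.weight v = 1 + ∑ c ∈ T.children v, T.weight c := by
  classical
  have hdesc : T.descendants v = insert v ((T.children v).biUnion T.descendants) := by
    ext u
    simp only [mem_insert, mem_biUnion, mem_descendants, mem_children]
    refine ⟨fun h => or_iff_not_imp_left.2 (h.exists_isChild ·), ?_⟩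
    rintro (rfl | ⟨c, hc, huc⟩)
    exacts [.refl u, huc.trans hc.isDescendant]
  rw [weight, hdesc, card_insert_of_notMem, card_biUnion, add_comm]
  · rfl
  · intro a ha b hb hab
    simp only [Function.onFun, disjoint_left, mem_descendants]
    exact fun u hua hub => hab (hua.eq_of_depth_eq hub <| by
      rw [(mem_children.1 ha).depth_eq, (mem_children.1 hb).depth_eq])
  · simp only [mem_biUnion, mem_descendants, mem_children, not_exists, not_and]
    intro c hc hvc
    have := hvc.depth_le
    have := hc.depth_eq
    omega

end Weight

section Layout

variable (T)

noncomputable def sumToRoot (f : V → ℝ) (v : V) : ℝ :=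
  ∑ k ∈ range (T.depth v), f (T.parent^[k] v)

variable {T}

theorem sumToRoot_eq (f : V → ℝ) (hv : v ≠ T.root) :
    T.sumToRoot f v = f v + T.sumToRoot f (T.parent v) := by
  rw [sumToRoot, sumToRoot, ← T.depth_parent hv, sum_range_succ', add_comm]
  simp only [Function.iterate_succ_apply, Function.iterate_zero_apply]

theorem IsDescendant.le_of_forall_le_parent {α : Type*} [Preorder α] {f : V → α}
    (hf : ∀ c, c ≠ T.root → f c ≤ f (T.parent c)) (h : T.IsDescendant u v) : f u ≤ f v := by
  obtain ⟨k, rfl⟩ := h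
  induction k with
  | zero => rfl
  | succ k ih =>
    rw [Function.iterate_succ_apply']
    refine ih.trans ?_
    by_cases hr : T.parent^[k] u = T.root
    · rw [hr, T.parent_root]
    · exact hf _ hr

variable (T) [Fintype V]

noncomputable def gap (v : V) : ℝ := 2 / (#(T.children v) + 1)

theorem gap_pos (v : V) : 0 < T.gap v := by
  unfold gap
  positivity

theorem gap_add_sum_children (v : V) :
    T.gap v + ∑ c ∈ T.children v, (2 * (T.weight c : ℝ) + T.gap v) = 2 * T.weight v := by
  have h : (#(T.children v) + 1 : ℝ) * T.gap v = 2 := by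
    unfold gap
    field_simp
  rw [sum_add_distrib, sum_const, nsmul_eq_mul, ← mul_sum, weight_eq_one_add_sum_children v]
  push_cast
  linarith

variable [LinearOrder V]

noncomputable def olderSiblings (c : V) : Finset V := {b ∈ T.children (T.parent c) | b < c}

noncomputable def offset (c : V) : ℝ :=
  T.gap (T.parent c) + ∑ b ∈ T.olderSiblings c, (2 * T.weight b + T.gap (T.parent c))

noncomputable def slotStart (v : V) : ℝ := T.sumToRoot T.offset v

noncomputable def centerX (v : V) : ℝ := T.slotStart v + T.weight v

noncomputable def drop (c : V) : ℝ :=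
  √((T.weight (T.parent c) + T.weight c) ^ 2 - (T.centerX c - T.centerX (T.parent c)) ^ 2)

noncomputable def centerY (v : V) : ℝ := -T.sumToRoot T.drop v

noncomputable def center (v : V) : EuclideanSpace ℝ (Fin 2) := !₂[T.centerX v, T.centerY v]

theorem offset_nonneg (c : V) : 0 ≤ T.offset c :=
  add_nonneg (T.gap_pos _).le (sum_nonneg fun _ _ => add_nonneg (by positivity) (T.gap_pos _).le)

theorem drop_nonneg (c : V) : 0 ≤ T.drop c := Real.sqrt_nonneg _

variable {T}

theorem offset_add_le_sum {S : Finset V} (hS : insert c (T.olderSiblings c) ⊆ S) :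
    T.offset c + 2 * T.weight c + T.gap (T.parent c) ≤
      T.gap (T.parent c) + ∑ b ∈ S, (2 * (T.weight b : ℝ) + T.gap (T.parent c)) := by
  have hc : c ∉ T.olderSiblings c := by simp [olderSiblings]
  have := sum_le_sum_of_subset_of_nonneg hS fun b _ _ =>
    add_nonneg (by positivity : (0 : ℝ) ≤ 2 * T.weight b) (T.gap_pos (T.parent c)).le
  rw [sum_insert hc] at this
  rw [offset]
  linarith

theorem offset_add_weight_le (hc : c ≠ T.root) :
    T.offset c + 2 * T.weight c + T.gap (T.parent c) ≤ 2 * T.weight (T.parent c) := by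
  exact (offset_add_le_sum (insert_subset (mem_children.2 ⟨hc, rfl⟩) (filter_subset _ _))).trans_eq
    (T.gap_add_sum_children _)

theorem offset_add_weight_le_offset {p a b : V} (hab : a < b) (ha : T.IsChild a p)
    (hb : T.IsChild b p) : T.offset a + 2 * T.weight a + T.gap p ≤ T.offset b := by
  have hS : insert a (T.olderSiblings a) ⊆ T.olderSiblings b := by
    simp only [olderSiblings, ha.2, hb.2, insert_subset_iff, mem_filter, mem_children]
    exact ⟨⟨ha, hab⟩, fun x hx => mem_filter.2 ⟨(mem_filter.1 hx).1, (mem_filter.1 hx).2.trans hab⟩⟩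
  have := offset_add_le_sum hS
  rw [ha.2] at this
  exact this.trans_eq (by rw [offset, hb.2])

theorem slotStart_eq (hc : c ≠ T.root) : T.slotStart c = T.offset c + T.slotStart (T.parent c) :=
  sumToRoot_eq _ hc

theorem IsDescendant.slotStart_le (h : T.IsDescendant u v) : T.slotStart v ≤ T.slotStart u :=
  neg_le_neg_iff.1 <| h.le_of_forall_le_parent (f := fun x => -T.slotStart x) fun c hc => by
    rw [slotStart_eq hc]
    linarith [T.offset_nonneg c]

theorem IsDescendant.slotEnd_le (h : T.IsDescendant u v) :
    T.slotStart u + 2 * T.weight u ≤ T.slotStart v + 2 * T.weight v :=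
  h.le_of_forall_le_parent (f := fun x => T.slotStart x + 2 * T.weight x) fun c hc => by
    rw [slotStart_eq hc]
    linarith [offset_add_weight_le hc, T.gap_pos (T.parent c)]

theorem IsDescendant.abs_centerX_sub_le (h : T.IsDescendant u v) :
    |T.centerX u - T.centerX v| ≤ T.weight v - T.weight u := by
  rw [abs_le, centerX, centerX]
  constructor <;> linarith [h.slotStart_le, h.slotEnd_le]

theorem drop_sq (hc : c ≠ T.root) :
    T.drop c ^ 2 =
      (T.weight (T.parent c) + T.weight c) ^ 2 - (T.centerX c - T.centerX (T.parent c)) ^ 2 := by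
  refine Real.sq_sqrt ?_
  have h := (IsChild.isDescendant ⟨hc, rfl⟩ : T.IsDescendant c (T.parent c)).abs_centerX_sub_le
  have hw : (0 : ℝ) ≤ T.weight c := by positivity
  nlinarith [abs_nonneg (T.centerX c - T.centerX (T.parent c)),
    sq_abs (T.centerX c - T.centerX (T.parent c))]

theorem centerY_eq (hc : c ≠ T.root) : T.centerY c = T.centerY (T.parent c) - T.drop c := by
  rw [centerY, centerY, sumToRoot_eq _ hc]
  ring

theorem IsDescendant.centerY_le (h : T.IsDescendant u v) : T.centerY u ≤ T.centerY v :=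
  h.le_of_forall_le_parent fun c hc => by
    rw [centerY_eq hc]
    linarith [T.drop_nonneg c]

end Layout

section Distance

variable [Fintype V] [LinearOrder V]

theorem dist_center_of_isChild (h : T.IsChild c v) :
    dist (T.center c) (T.center v) = T.weight c + T.weight v := by
  obtain ⟨hc, rfl⟩ := h
  have hsq : (T.centerX c - T.centerX (T.parent c)) ^ 2 + (T.centerY c - T.centerY (T.parent c)) ^ 2
      = (T.weight c + T.weight (T.parent c) : ℝ) ^ 2 := by
    rw [centerY_eq hc]
    linear_combination drop_sq hc
  rw [center, center, dist_mk_two, hsq, Real.sqrt_sq (by positivity)]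

theorem dist_center_of_isChild_of_isDescendant (hc : T.IsChild c v) (hu : T.IsDescendant u c)
    (hne : u ≠ c) : T.weight u + T.weight v < dist (T.center u) (T.center v) := by
  obtain ⟨hcr, rfl⟩ := hc
  have hdx := (IsChild.isDescendant ⟨hcr, rfl⟩ : T.IsDescendant c (T.parent c)).abs_centerX_sub_le
  have hkey := sq_add_lt_of_abs_le (by positivity) (by exact_mod_cast hu.weight_lt hne)
    hdx hu.abs_centerX_sub_le
    (drop_sq hcr) (T.drop_nonneg c) (sub_nonneg.2 hu.centerY_le)
  rw [center, center, dist_mk_two, add_comm, Real.lt_sqrt (by positivity)]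
  rw [centerY_eq hcr] at hkey
  linear_combination hkey

theorem dist_center_of_siblings {p a b : V} (hab : a < b) (ha : T.IsChild a p) (hb : T.IsChild b p)
    (hu : T.IsDescendant u a) (hv : T.IsDescendant v b) :
    T.weight u + T.weight v < dist (T.center u) (T.center v) := by
  have hsep := offset_add_weight_le_offset hab ha hb
  have hua := hu.slotEnd_le
  have hvb := hv.slotStart_le
  rw [slotStart_eq ha.1, ha.2] at hua
  rw [slotStart_eq hb.1, hb.2] at hvb
  calc (T.weight u + T.weight v : ℝ) < |T.centerX u - T.centerX v| := by
        rw [abs_sub_comm, centerX, centerX]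
        exact lt_abs.2 (Or.inl (by linarith [T.gap_pos p]))
    _ ≤ dist (T.center u) (T.center v) := by
        rw [center, center, dist_mk_two]
        exact Real.abs_le_sqrt (le_add_of_nonneg_right (sq_nonneg _))

theorem tangent_or_separated (huv : u ≠ v) :
    (dist (T.center u) (T.center v) = T.weight u + T.weight v ∧
        (T.IsChild u v ∨ T.IsChild v u)) ∨
      (T.weight u + T.weight v < dist (T.center u) (T.center v) ∧
        ¬(T.IsChild u v ∨ T.IsChild v u)) := by
  have of_isDescendant {u v : V} (h : T.IsDescendant u v) (huv : u ≠ v) :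
      (dist (T.center u) (T.center v) = T.weight u + T.weight v ∧ T.IsChild u v) ∨
        (T.weight u + T.weight v < dist (T.center u) (T.center v) ∧
          ¬(T.IsChild u v ∨ T.IsChild v u)) := by
    obtain ⟨c, hc, huc⟩ := h.exists_isChild huv
    by_cases hu : u = c
    · subst hu
      exact Or.inl ⟨dist_center_of_isChild hc, hc⟩
    · exact Or.inr ⟨dist_center_of_isChild_of_isDescendant hc huc hu,
        not_isChild_of_isDescendant_of_isChild hc huc hu⟩
  rcases isDescendant_or_isDescendant_or_exists_siblings u v
    with h | h | ⟨p, a, b, hab, ha, hb, hua, hvb⟩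
  · exact (of_isDescendant h huv).imp_left fun h => ⟨h.1, Or.inl h.2⟩
  · rw [dist_comm, add_comm]
    exact (of_isDescendant h huv.symm).imp (fun h => ⟨h.1, Or.inr h.2⟩)
      fun h => ⟨h.1, h.2 ∘ Or.symm⟩
  · refine Or.inr ⟨?_, not_or.2 ⟨not_isChild_of_siblings hab ha hb hua hvb,
      not_isChild_of_siblings hab.symm hb ha hvb hua⟩⟩
    rcases hab.lt_or_gt with hlt | hlt
    · exact dist_center_of_siblings hlt ha hb hua hvb
    · rw [dist_comm, add_comm]
      exact dist_center_of_siblings hlt hb ha hvb hua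

end Distance

end Rooting

open SimpleGraph in
theorem SimpleGraph.IsTree.exists_rooting {V : Type*} {G : SimpleGraph V} (hG : G.IsTree) :
    ∃ T : Rooting V, ∀ a b, G.Adj a b ↔ T.IsChild a b ∨ T.IsChild b a := by
  classical
  obtain ⟨t⟩ := hG.connected.nonempty
  choose P hP hPlen using hG.connected.exists_path_of_dist t
  have hadj {v : V} (hv : v ≠ t) : G.Adj (P v).penultimate v :=
    (P v).adj_penultimate (Walk.not_nil_of_ne hv.symm)
  have hdist {v : V} (hv : v ≠ t) : G.dist t (P v).penultimate + 1 = G.dist t v := by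
    have := dist_le (P v).dropLast
    rcases hG.dist_eq_dist_add_one_of_adj t (hadj hv) with h | h
    · rw [Walk.length_dropLast, hPlen] at this
      omega
    · exact h.symm
  have huniq {v w : V} (hw : G.Adj v w) (hd : G.dist t w + 1 = G.dist t v) :
      (P v).penultimate = w := by
    refine (hG.isAcyclic.eq_penultimate_of_adj_end (hP v) hw ?_).symm
    refine hG.isAcyclic.mem_support_of_ne_mem_support_of_adj_of_isPath (hP v) (hP w) hw fun hv => ?_
    have := (dist_le ((P w).takeUntil v hv)).trans (Walk.length_takeUntil_le_length _ hv)
    have := hPlen w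
    omega
  refine ⟨⟨t, fun v => (P v).penultimate, G.dist t, ?_, hG.connected.dist_eq_zero_iff.trans eq_comm,
    hdist⟩, fun a b => ⟨fun hab => ?_, ?_⟩⟩
  · have : (P t).length = 0 := by rw [hPlen, dist_self]
    simp [Walk.penultimate, this]
  · have hne {v w : V} (h : G.dist t w + 1 = G.dist t v) : v ≠ t := by
      rintro rfl
      simp at h
    rcases hG.dist_eq_dist_add_one_of_adj t hab with h | h
    · exact Or.inl ⟨hne h.symm, huniq hab h.symm⟩
    · exact Or.inr ⟨hne h.symm, huniq hab.symm h.symm⟩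
  · rintro (⟨ha, rfl⟩ | ⟨hb, rfl⟩)
    · exact (hadj ha).symm
    · exact hadj hb

theorem tree_balanced_circle_contact_general
    (V : Type) [Fintype V] (G : SimpleGraph V) (hG : G.IsTree) :
    ∃ (c : V → EuclideanSpace ℝ (Fin 2)) (r : V → ℝ),
      (∀ v, 0 < r v) ∧
      (∀ u v : V, u ≠ v →
        r u + r v ≤ dist (c u) (c v) ∧ (dist (c u) (c v) = r u + r v ↔ G.Adj u v)) ∧
      (∀ u v : V, r u ≤ 2 * (Fintype.card V : ℝ) * r v) := by
  obtain ⟨T, hT⟩ := hG.exists_rooting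
  let : LinearOrder V := LinearOrder.lift' _ (Fintype.equivFin V).injective
  refine ⟨T.center, fun v => T.weight v, fun v => Nat.cast_pos.2 (T.one_le_weight v),
    fun u v huv => ?_, fun u v => ?_⟩
  · rw [hT]
    rcases T.tangent_or_separated huv with ⟨h, hadj⟩ | ⟨h, hadj⟩
    · exact ⟨h.ge, iff_of_true h hadj⟩
    · exact ⟨h.le, iff_of_false h.ne' hadj⟩
  · have hu : T.weight u ≤ 2 * Fintype.card V * T.weight v :=
      calc T.weight u ≤ Fintype.card V := T.weight_le_card u
        _ ≤ 2 * Fintype.card V * T.weight v := by nlinarith [T.one_le_weight v]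
    show (T.weight u : ℝ) ≤ 2 * (Fintype.card V : ℝ) * T.weight v
    exact_mod_cast hu

/-- Every tree has a balanced circle-contact representation: there are circles
(centers `c v`, radii `r v > 0`) whose open disks are pairwise disjoint, tangent
exactly when the corresponding vertices are adjacent, and whose radii differ by a
factor of at most `2 n`. -/
theorem tree_balanced_circle_contact
    (V : Type) [Fintype V] [Nonempty V] (G : SimpleGraph V) (hG : G.IsTree) :
    ∃ (c : V → EuclideanSpace ℝ (Fin 2)) (r : V → ℝ),
      (∀ v, 0 < r v) ∧
      (∀ u v : V, u ≠ v →
        r u + r v ≤ dist (c u) (c v) ∧ (dist (c u) (c v) = r u + r v ↔ G.Adj u v)) ∧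
      (∀ u v : V, r u ≤ 2 * (Fintype.card V : ℝ) * r v) :=
  tree_balanced_circle_contact_general V G hG
end

section
/- Existence of weight-balanced binary trees: let w₁, …, w_m be positive real numbers (m ≥ 1) with W = w₁ + ⋯ + w_m. Then there exists a binary tree t with exactly m leaves such that, for each i with 1 ≤ i ≤ m, the depth of the i-th leaf of t in left-to-right order is at most logb 2 (W / wᵢ) + 2. -/
/-!
Place the weights side by side on `[0, W]`, the `i`-th occupying an interval of length `wᵢ`, and
bisect `[0, W]` recursively, creating an internal node only when a bisection separates centres of
weight intervals; a dyadic subinterval containing a single centre becomes a leaf. A leaf of depth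
`d ≥ 1` thus lies below a subinterval of length `W / 2ᵈ⁻¹` containing at least two centres, and
since the weight intervals are disjoint, its radius satisfies `wᵢ / 2 < W / 2ᵈ⁻¹`, i.e.
`2ᵈ < 4W / wᵢ`.
-/

/-- A binary tree: either a single leaf or an internal node with two subtrees. -/
inductive BinTree : Type
  | leaf : BinTree
  | node : BinTree → BinTree → BinTree

/-- The list of depths of the leaves of a binary tree, in left-to-right order. -/
def BinTree.leafDepths : BinTree → List ℕ
  | .leaf => [0]
  | .node l r => (l.leafDepths.map (· + 1)) ++ (r.leafDepths.map (· + 1))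

open Finset Filter

theorem List.exists_eq_append_of_pairwise_le {α β : Type*} [LinearOrder β] (f : α → β) (c : β)
    {L : List α} (hL : L.Pairwise fun x y => f x ≤ f y) :
    ∃ L₁ L₂, L = L₁ ++ L₂ ∧ (∀ x ∈ L₁, f x ≤ c) ∧ ∀ x ∈ L₂, c < f x := by
  induction L with
  | nil => exact ⟨[], [], rfl, by simp, by simp⟩
  | cons x L ih =>
    obtain ⟨hx, hL⟩ := List.pairwise_cons.1 hL
    obtain ⟨L₁, L₂, rfl, h₁, h₂⟩ := ih hL
    by_cases hxc : f x ≤ c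
    · exact ⟨x :: L₁, L₂, rfl, by simpa [hxc] using h₁, h₂⟩
    · refine ⟨[], x :: (L₁ ++ L₂), rfl, by simp, ?_⟩
      simp only [List.mem_cons]
      rintro y (rfl | hy)
      · exact not_le.1 hxc
      · exact (not_le.1 hxc).trans_le (hx y hy)

lemma forall₂_map_succ_of_mul_pow_le {L : List (ℝ × ℝ)} {ds : List ℕ} {ℓ : ℝ}
    (h : ds.Forall₂ (fun d p => p.2 * 2 ^ d ≤ ℓ) L) :
    (ds.map (· + 1)).Forall₂ (fun d p => p.2 * 2 ^ d ≤ 2 * ℓ) L :=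
  List.forall₂_map_left_iff.2 <| h.imp fun {d p} hd => by rw [pow_succ]; linarith

lemma exists_binTree_append {L₁ L₂ : List (ℝ × ℝ)} {ℓ : ℝ} (hℓ : 0 ≤ ℓ) (hne : L₁ ++ L₂ ≠ [])
    (h₁ : L₁ ≠ [] → ∃ t : BinTree, t.leafDepths.Forall₂ (fun d p => p.2 * 2 ^ d ≤ ℓ) L₁)
    (h₂ : L₂ ≠ [] → ∃ t : BinTree, t.leafDepths.Forall₂ (fun d p => p.2 * 2 ^ d ≤ ℓ) L₂) :
    ∃ t : BinTree, t.leafDepths.Forall₂ (fun d p => p.2 * 2 ^ d ≤ 2 * ℓ) (L₁ ++ L₂) := by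
  have weaken {M : List (ℝ × ℝ)} {ds : List ℕ} (h : ds.Forall₂ (fun d p => p.2 * 2 ^ d ≤ ℓ) M) :
      ds.Forall₂ (fun d p => p.2 * 2 ^ d ≤ 2 * ℓ) M :=
    h.imp fun {_ _} hd => by linarith
  rcases eq_or_ne L₁ [] with rfl | hne₁
  · obtain ⟨t, ht⟩ := h₂ (by simpa using hne)
    exact ⟨t, weaken ht⟩
  rcases eq_or_ne L₂ [] with rfl | hne₂
  · obtain ⟨t, ht⟩ := h₁ hne₁
    exact ⟨t, by simpa using weaken ht⟩
  obtain ⟨t₁, ht₁⟩ := h₁ hne₁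
  obtain ⟨t₂, ht₂⟩ := h₂ hne₂
  exact ⟨.node t₁ t₂, List.rel_append (forall₂_map_succ_of_mul_pow_le ht₁)
    (forall₂_map_succ_of_mul_pow_le ht₂)⟩

lemma Set.Finite.exists_forall_le_pow_mul {ι : Type*} {s : Set ι} (hs : s.Finite) {c : ℝ}
    (hc : 1 < c) {r : ι → ℝ} (hr : ∀ i ∈ s, 0 < r i) (x : ℝ) :
    ∃ D : ℕ, ∀ i ∈ s, x ≤ c ^ D * r i := by
  have h : ∀ i ∈ s, ∀ᶠ D : ℕ in atTop, x ≤ c ^ D * r i := fun i hi =>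
    ((tendsto_pow_atTop_atTop_of_one_lt hc).atTop_mul_const (hr i hi)).eventually_ge_atTop x
  exact ((eventually_all_finite hs).2 h).exists

section Separated

/- A pair `(c, r)` stands for the interval `[c - r, c + r]`; the `Pairwise` hypothesis below says
that these intervals are disjoint and listed from left to right. -/

variable {L : List (ℝ × ℝ)} {a b : ℝ}

lemma eq_singleton_or_forall_lt_of_separated (hne : L ≠ []) (hpos : ∀ p ∈ L, 0 < p.2)
    (hsep : L.Pairwise fun p q => p.1 + p.2 ≤ q.1 - q.2) (hmem : ∀ p ∈ L, p.1 ∈ Set.Icc a b) :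
    (∃ p, L = [p]) ∨ ∀ p ∈ L, p.2 < b - a := by
  match L, hne with
  | [p], _ => exact .inl ⟨p, rfl⟩
  | x :: y :: rest, _ =>
    right
    intro p hp
    rcases List.mem_cons.1 hp with rfl | hp'
    · have hpy := (List.pairwise_cons.1 hsep).1 y (by simp)
      linarith [(hmem p hp).1, (hmem y (by simp)).2, hpos y (by simp)]
    · have hxp := (List.pairwise_cons.1 hsep).1 p hp'
      linarith [(hmem x (by simp)).1, (hmem p hp).2, hpos x (by simp)]

/- Induction on `D`: after `D` bisections every subinterval is shorter than every radius, so it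
contains at most one centre. -/
theorem exists_binTree_of_separated_of_le_two_pow_mul (D : ℕ) (hne : L ≠ [])
    (hpos : ∀ p ∈ L, 0 < p.2) (hsep : L.Pairwise fun p q => p.1 + p.2 ≤ q.1 - q.2)
    (hmem : ∀ p ∈ L, p.1 ∈ Set.Icc a b) (hsmall : ∀ p ∈ L, p.2 ≤ 2 * (b - a))
    (hfuel : ∀ p ∈ L, b - a ≤ 2 ^ D * p.2) :
    ∃ t : BinTree, t.leafDepths.Forall₂ (fun d p => p.2 * 2 ^ d ≤ 2 * (b - a)) L := by
  induction D generalizing L a b with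
  | zero =>
    rcases eq_singleton_or_forall_lt_of_separated hne hpos hsep hmem with ⟨p, rfl⟩ | hlt
    · exact ⟨.leaf, .cons (by simpa using hsmall p (by simp)) .nil⟩
    · obtain ⟨p, hp⟩ := List.exists_mem_of_ne_nil L hne
      linarith [hlt p hp, hfuel p hp, pow_zero (2 : ℝ)]
  | succ D ih =>
    rcases eq_singleton_or_forall_lt_of_separated hne hpos hsep hmem with ⟨p, rfl⟩ | hlt
    · exact ⟨.leaf, .cons (by simpa using hsmall p (by simp)) .nil⟩
    have half (M : List (ℝ × ℝ)) (hM : M.Sublist L) (hMne : M ≠ []) (a' b' : ℝ)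
        (hlen : b' - a' = (b - a) / 2) (hmem' : ∀ p ∈ M, p.1 ∈ Set.Icc a' b') :
        ∃ t : BinTree, t.leafDepths.Forall₂ (fun d p => p.2 * 2 ^ d ≤ b - a) M := by
      have := ih hMne (fun p hp => hpos p (hM.subset hp)) (hsep.sublist hM) hmem'
        (fun p hp => by linarith [hlt p (hM.subset hp)])
        (fun p hp => by have := hfuel p (hM.subset hp); rw [pow_succ] at this; linarith)
      simpa [hlen, mul_div_cancel₀] using this
    obtain ⟨p, hp⟩ := List.exists_mem_of_ne_nil L hne
    obtain ⟨L₁, L₂, rfl, h₁, h₂⟩ := List.exists_eq_append_of_pairwise_le Prod.fst ((a + b) / 2)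
      (hsep.imp_of_mem fun hp hq h => by linarith [hpos _ hp, hpos _ hq])
    exact exists_binTree_append (by linarith [hpos p hp, hlt p hp]) hne
      (fun hne₁ => half L₁ (List.sublist_append_left _ _) hne₁ a ((a + b) / 2) (by ring)
        fun p hp => ⟨(hmem p (by simp [hp])).1, h₁ p hp⟩)
      (fun hne₂ => half L₂ (List.sublist_append_right _ _) hne₂ ((a + b) / 2) b (by ring)
        fun p hp => ⟨(h₂ p hp).le, (hmem p (by simp [hp])).2⟩)

theorem exists_binTree_of_separated (hne : L ≠ []) (hpos : ∀ p ∈ L, 0 < p.2)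
    (hsep : L.Pairwise fun p q => p.1 + p.2 ≤ q.1 - q.2) (hmem : ∀ p ∈ L, p.1 ∈ Set.Icc a b)
    (hsmall : ∀ p ∈ L, p.2 ≤ 2 * (b - a)) :
    ∃ t : BinTree, t.leafDepths.Forall₂ (fun d p => p.2 * 2 ^ d ≤ 2 * (b - a)) L :=
  let ⟨D, hD⟩ := L.finite_toSet.exists_forall_le_pow_mul one_lt_two hpos (b - a)
  exists_binTree_of_separated_of_le_two_pow_mul D hne hpos hsep hmem hsmall hD

end Separated

lemma natCast_le_logb_div_add_two {x y : ℝ} {d : ℕ} (hx : 0 < x) (h : x * 2 ^ d ≤ 4 * y) :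
    (d : ℝ) ≤ Real.logb 2 (y / x) + 2 := by
  have hyx : 0 < y / x := div_pos (by nlinarith [pow_pos (two_pos : (0 : ℝ) < 2) d]) hx
  suffices (d : ℝ) - 2 ≤ Real.logb 2 (y / x) by linarith
  rw [Real.le_logb_iff_rpow_le one_lt_two hyx, Real.rpow_sub two_pos, Real.rpow_natCast,
    Real.rpow_two, le_div_iff₀ hx]
  linarith

/-- The `i`-th weight occupies `[∑ k < i, w k, ∑ k ≤ i, w k]`, encoded by its centre and radius. -/
noncomputable def weightIntervals {m : ℕ} (w : Fin m → ℝ) : List (ℝ × ℝ) :=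
  List.ofFn fun i => (∑ k ∈ Iio i, w k + w i / 2, w i / 2)

section WeightIntervals

variable {m : ℕ} {w : Fin m → ℝ}

lemma sum_Iio_add_le_sum_Iio_of_lt (hw : ∀ i, 0 ≤ w i) {i j : Fin m} (hij : i < j) :
    ∑ k ∈ Iio i, w k + w i ≤ ∑ k ∈ Iio j, w k := by
  rw [sum_Iio_add_eq_sum_Iic]
  exact sum_le_sum_of_subset_of_nonneg (fun k hk => mem_Iio.2 ((mem_Iic.1 hk).trans_lt hij))
    fun k _ _ => hw k

lemma pairwise_weightIntervals (hw : ∀ i, 0 ≤ w i) :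
    (weightIntervals w).Pairwise fun p q => p.1 + p.2 ≤ q.1 - q.2 :=
  List.pairwise_ofFn.2 fun i j hij => by linarith [sum_Iio_add_le_sum_Iio_of_lt hw hij]

lemma weightIntervals_fst_mem_Icc (hw : ∀ i, 0 ≤ w i) :
    ∀ p ∈ weightIntervals w, p.1 ∈ Set.Icc 0 (∑ j, w j) := by
  simp only [weightIntervals, List.forall_mem_ofFn_iff, Set.mem_Icc]
  intro i
  have hle : ∑ k ∈ Iic i, w k ≤ ∑ j, w j :=
    sum_le_sum_of_subset_of_nonneg (subset_univ _) fun k _ _ => hw k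
  constructor
  · linarith [sum_nonneg fun k (_ : k ∈ Iio i) => hw k, hw i]
  · linarith [sum_Iio_add_eq_sum_Iic (f := w) i, hw i]

end WeightIntervals

/-- Existence of weight-balanced binary trees: for positive weights `w 1, …, w m`
with total weight `W`, there is a binary tree with exactly `m` leaves in which the
`i`-th leaf (in left-to-right order) has depth at most `logb 2 (W / w i) + 2`. -/
theorem exists_weight_balanced_binTree
    (m : ℕ) (hm : 1 ≤ m) (w : Fin m → ℝ) (hw : ∀ i, 0 < w i) :
    ∃ t : BinTree, ∃ hlen : t.leafDepths.length = m,
      ∀ i : Fin m,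
        (t.leafDepths.get (Fin.cast hlen.symm i) : ℝ) ≤
          Real.logb 2 ((∑ j, w j) / w i) + 2 := by
  have hw₀ i := (hw i).le
  have hsmall : ∀ p ∈ weightIntervals w, p.2 ≤ 2 * ((∑ j, w j) - 0) := by
    simp only [weightIntervals, List.forall_mem_ofFn_iff]
    intro i
    linarith [single_le_sum (fun k _ => hw₀ k) (mem_univ i), hw i]
  obtain ⟨t, ht⟩ := exists_binTree_of_separated
    (by simpa [weightIntervals] using Nat.one_le_iff_ne_zero.1 hm) (by simp [weightIntervals, hw])
    (pairwise_weightIntervals hw₀) (weightIntervals_fst_mem_Icc hw₀) hsmall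
  have hlen : t.leafDepths.length = m := by simpa [weightIntervals] using ht.length_eq
  refine ⟨t, hlen, fun i => natCast_le_logb_div_add_two (hw i) ?_⟩
  have := (List.forall₂_iff_get.1 ht).2 i (by simp [hlen]) (by simp [weightIntervals])
  simp only [weightIntervals, List.get_eq_getElem, List.getElem_ofFn, Fin.eta, Fin.val_cast]
    at this ⊢
  linarith
end
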